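/- arXiv:2412.17419 — 2 statements merged into one kernel-verified Lean document; each statement's English description precedes it below -/
import Mathlib

section
/- Let b = e^{iθ} with θ = Arg b ∈ (0, π/2), and Z(x,ξ₂) = √(2b)(x − ξ₂/b). Then for all real x, ξ₂ with ξ₂ ≠ 0: 2 sin²(Arg b) · ξ₂² ≤ |Z(x,ξ₂)|² ≤ 2(|x| + |ξ₂|)². -/
theorem Z_abs_bounds (θ : ℝ) (hθ : θ ∈ Set.Ioo 0 (Real.pi / 2))
    (b : ℂ) (hb : b = Complex.exp (θ * Complex.I))
    (Z : ℝ → ℝ → ℂ)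
    (hZ : ∀ x ξ₂ : ℝ, Z x ξ₂ = (2 * b) ^ (1 / 2 : ℂ) * ((x : ℂ) - (ξ₂ : ℂ) / b))
    (x ξ₂ : ℝ) (hξ₂ : ξ₂ ≠ 0) :
    2 * Real.sin θ ^ 2 * ξ₂ ^ 2 ≤ ‖Z x ξ₂‖ ^ 2 ∧
    ‖Z x ξ₂‖ ^ 2 ≤ 2 * (|x| + |ξ₂|) ^ 2 := by
  have hb0 : b ≠ 0 := by rw [hb]; exact Complex.exp_ne_zero _
  have habs_b : ‖b‖ = 1 := by
    rw [hb]
    simp [Complex.norm_exp]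
  set w : ℂ := (x : ℂ) - (ξ₂ : ℂ) / b with hw
  have hcoef : ‖(2 * b) ^ (1 / 2 : ℂ)‖ = Real.sqrt 2 := by
    rw [Complex.norm_cpow_of_ne_zero (by simp [hb0])]
    simp [habs_b]
    rw [Real.sqrt_eq_rpow]
    norm_num
  have hZabs : ‖Z x ξ₂‖ ^ 2 = 2 * ‖w‖ ^ 2 := by
    rw [hZ, norm_mul, mul_pow, hcoef, Real.sq_sqrt (by norm_num)]
  have him : w.im = ξ₂ * Real.sin θ := by
    rw [hw]
    have hbre : b.re = Real.cos θ := by rw [hb]; simp [Complex.exp_ofReal_mul_I_re]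
    have hbim : b.im = Real.sin θ := by rw [hb]; simp [Complex.exp_ofReal_mul_I_im]
    have hnsq : Complex.normSq b = 1 := by
      rw [← Complex.sq_norm, habs_b]; norm_num
    simp [Complex.sub_im, Complex.div_im, hbre, hbim, hnsq]
  constructor
  · rw [hZabs]
    have h1 : w.im ^ 2 ≤ ‖w‖ ^ 2 := by
      rw [Complex.sq_norm, Complex.normSq_apply]
      nlinarith [sq_nonneg w.re]
    have h2 : w.im ^ 2 = Real.sin θ ^ 2 * ξ₂ ^ 2 := by rw [him]; ring
    nlinarith
  · rw [hZabs]
    have h1 : ‖w‖ ≤ |x| + |ξ₂| := by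
      calc ‖w‖ ≤ ‖(x : ℂ)‖ + ‖(ξ₂ : ℂ) / b‖ :=
            norm_sub_le _ _
        _ = |x| + |ξ₂| := by rw [norm_div, habs_b]; simp
    have h2 : ‖w‖ ^ 2 ≤ (|x| + |ξ₂|) ^ 2 := by
      apply pow_le_pow_left₀ (norm_nonneg _) h1
    linarith
end

section
/- With notation as in the Weyl-sequence construction for purely imaginary field: for λ ∈ ℂ with Im λ ≥ 0 and α ∈ (1,2), there exist constants c > 0 and N such that for all n ≥ N, ‖Ψ_n‖²_{L²(ℝ²)} ≥ c·n^{Im λ − 1} if Im λ > 0, and ‖Ψ_n‖² ≥ c·ln(n)/n if Im λ = 0. -/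
open MeasureTheory

private lemma measurable_cpow_const' (s : ℂ) : Measurable fun z : ℂ => z ^ s := by
  have h : (fun z : ℂ => z ^ s)
      = fun z => if z = 0 then (if s = 0 then 1 else 0) else Complex.exp (Complex.log z * s) :=
    funext fun z => Complex.cpow_def z s
  rw [h]
  exact Measurable.ite (measurableSet_singleton 0) measurable_const
    (Complex.measurable_exp.comp (Complex.measurable_log.mul_const s))

private lemma abs_u_sq_eq' (lam : ℂ) (ξ₁ ξ₂ : ℝ) (h1 : 0 < ξ₁) :
    ‖Complex.exp (-((ξ₁ : ℂ) * ξ₂) / 2 + Complex.I * ξ₁ ^ 2 / 4) *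
        ((ξ₁ : ℂ) - Complex.I * ξ₂) ^ (-(1 + Complex.I * lam) / 2)‖ ^ 2
      = Real.exp (-(ξ₁ * ξ₂)) * ‖(ξ₁ : ℂ) - Complex.I * ξ₂‖ ^ (lam.im - 1)
        / Real.exp (Complex.arg ((ξ₁ : ℂ) - Complex.I * ξ₂) * (-lam.re)) := by
  set z : ℂ := (ξ₁ : ℂ) - Complex.I * ξ₂ with hz
  have hzre : z.re = ξ₁ := by simp [hz]
  have hz0 : z ≠ 0 := fun h => by rw [h] at hzre; simp at hzre; linarith
  have hsre : ((-(1 + Complex.I * lam)) / 2).re = (lam.im - 1) / 2 := by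
    simp [Complex.div_re]; ring
  have hsim : ((-(1 + Complex.I * lam)) / 2).im = -lam.re / 2 := by
    simp [Complex.div_im]
  rw [norm_mul, Complex.norm_exp, Complex.norm_cpow_of_ne_zero hz0, hsre, hsim]
  have hre : (-((ξ₁ : ℂ) * ξ₂) / 2 + Complex.I * ξ₁ ^ 2 / 4).re = -(ξ₁ * ξ₂) / 2 := by
    simp [← Complex.ofReal_pow]
  rw [hre, mul_pow, div_pow, ← Real.exp_nat_mul, ← Real.exp_nat_mul,
    ← Real.rpow_natCast (‖z‖ ^ ((lam.im - 1)/2)) 2,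
    ← Real.rpow_mul (norm_nonneg z)]
  norm_num
  ring_nf

private lemma absz_eq' (ξ₁ ξ₂ : ℝ) :
    ‖(ξ₁ : ℂ) - Complex.I * ξ₂‖ = Real.sqrt (ξ₁ ^ 2 + ξ₂ ^ 2) := by
  rw [Complex.norm_def, Complex.normSq_apply]; simp; ring_nf

private lemma absz_lower' (ξ₁ ξ₂ : ℝ) (h1 : 0 ≤ ξ₁) :
    ξ₁ ≤ ‖(ξ₁ : ℂ) - Complex.I * ξ₂‖ := by
  rw [absz_eq']
  calc ξ₁ = Real.sqrt (ξ₁ ^ 2) := by rw [Real.sqrt_sq h1]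
    _ ≤ _ := Real.sqrt_le_sqrt (by nlinarith)

private lemma arg_exp_le' (lam : ℂ) (z : ℂ) :
    Real.exp (Complex.arg z * (-lam.re)) ≤ Real.exp (Real.pi * |lam.re|) := by
  apply Real.exp_le_exp.mpr
  calc Complex.arg z * (-lam.re) ≤ |Complex.arg z * (-lam.re)| := le_abs_self _
    _ = |Complex.arg z| * |lam.re| := by rw [abs_mul, abs_neg]
    _ ≤ Real.pi * |lam.re| := by
        have := Complex.abs_arg_le_pi z
        have := abs_nonneg lam.re
        nlinarith

private lemma arg_exp_ge' (lam : ℂ) (z : ℂ) :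
    Real.exp (-(Real.pi * |lam.re|)) ≤ Real.exp (Complex.arg z * (-lam.re)) := by
  apply Real.exp_le_exp.mpr
  have h : |Complex.arg z * (-lam.re)| ≤ Real.pi * |lam.re| := by
    rw [abs_mul, abs_neg]
    have := Complex.abs_arg_le_pi z
    have := abs_nonneg lam.re
    nlinarith
  have := neg_abs_le (Complex.arg z * (-lam.re))
  linarith

private lemma abs_u_sq_lower' (lam : ℂ) (hβ : 0 ≤ lam.im) (ξ₁ ξ₂ : ℝ)
    (h1 : 0 < ξ₁) (h2 : |ξ₂| ≤ ξ₁) :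
    Real.exp (-(ξ₁ * ξ₂)) * ξ₁ ^ (lam.im - 1) / (Real.exp (Real.pi * |lam.re|) * Real.sqrt 2)
      ≤ ‖Complex.exp (-((ξ₁ : ℂ) * ξ₂) / 2 + Complex.I * ξ₁ ^ 2 / 4) *
        ((ξ₁ : ℂ) - Complex.I * ξ₂) ^ (-(1 + Complex.I * lam) / 2)‖ ^ 2 := by
  rw [abs_u_sq_eq' lam ξ₁ ξ₂ h1]
  have habs_eq := absz_eq' ξ₁ ξ₂
  have hlo := absz_lower' ξ₁ ξ₂ h1.le
  have harg := arg_exp_le' lam ((ξ₁ : ℂ) - Complex.I * ξ₂)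
  set β := lam.im
  set A := Real.exp (-(ξ₁ * ξ₂))
  set az := ‖(ξ₁ : ℂ) - Complex.I * ξ₂‖
  set E := Real.exp (Real.pi * |lam.re|)
  set C := Real.exp (Complex.arg ((ξ₁ : ℂ) - Complex.I * ξ₂) * (-lam.re))
  have hs2 : (1 : ℝ) ≤ Real.sqrt 2 := by
    rw [show (1:ℝ) = Real.sqrt 1 by simp]
    exact Real.sqrt_le_sqrt (by norm_num)
  have hhi : az ≤ Real.sqrt 2 * ξ₁ := by
    rw [habs_eq]
    calc Real.sqrt (ξ₁ ^ 2 + ξ₂ ^ 2) ≤ Real.sqrt (2 * ξ₁ ^ 2) := by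
          apply Real.sqrt_le_sqrt
          have : ξ₂ ^ 2 ≤ ξ₁ ^ 2 := by
            nlinarith [abs_nonneg ξ₂, _root_.sq_abs ξ₂, le_abs_self ξ₂]
          linarith
      _ = Real.sqrt 2 * ξ₁ := by
          rw [Real.sqrt_mul (by norm_num), Real.sqrt_sq h1.le]
  have hkey : ξ₁ ^ (β - 1) / Real.sqrt 2 ≤ az ^ (β - 1) := by
    rcases le_or_gt 1 β with hb | hb
    · calc ξ₁ ^ (β - 1) / Real.sqrt 2 ≤ ξ₁ ^ (β - 1) :=
            div_le_self (Real.rpow_nonneg h1.le _) hs2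
        _ ≤ az ^ (β - 1) := Real.rpow_le_rpow h1.le hlo (by linarith)
    · calc ξ₁ ^ (β - 1) / Real.sqrt 2 = Real.sqrt 2 ^ (-1 : ℝ) * ξ₁ ^ (β - 1) := by
            rw [Real.rpow_neg_one]; ring
        _ ≤ Real.sqrt 2 ^ (β - 1) * ξ₁ ^ (β - 1) := by
            apply mul_le_mul_of_nonneg_right _ (Real.rpow_nonneg h1.le _)
            exact Real.rpow_le_rpow_of_exponent_le hs2 (by linarith)
        _ = (Real.sqrt 2 * ξ₁) ^ (β - 1) := by
            rw [Real.mul_rpow (by positivity) h1.le]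
        _ ≤ az ^ (β - 1) :=
            Real.rpow_le_rpow_of_nonpos (by nlinarith) hhi (by linarith)
  have hA : 0 < A := Real.exp_pos _
  have hC : 0 < C := Real.exp_pos _
  have hE : 0 < E := Real.exp_pos _
  calc A * ξ₁ ^ (β - 1) / (E * Real.sqrt 2) = A * (ξ₁ ^ (β - 1) / Real.sqrt 2) / E := by ring
    _ ≤ A * az ^ (β - 1) / E := by gcongr
    _ ≤ A * az ^ (β - 1) / C :=
        div_le_div_of_nonneg_left (by positivity) hC harg

private lemma abs_u_sq_upper' (lam : ℂ) (hβ : 0 ≤ lam.im) (ξ₁ ξ₂ : ℝ)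
    (h1 : 1 ≤ ξ₁) (h2 : |ξ₂| ≤ 2) :
    ‖Complex.exp (-((ξ₁ : ℂ) * ξ₂) / 2 + Complex.I * ξ₁ ^ 2 / 4) *
        ((ξ₁ : ℂ) - Complex.I * ξ₂) ^ (-(1 + Complex.I * lam) / 2)‖ ^ 2
      ≤ Real.exp (Real.pi * |lam.re|) * (3 ^ lam.im * ξ₁ ^ lam.im) * Real.exp (-(ξ₁ * ξ₂)) := by
  have h1' : (0:ℝ) < ξ₁ := by linarith
  rw [abs_u_sq_eq' lam ξ₁ ξ₂ h1']
  have habs_eq := absz_eq' ξ₁ ξ₂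
  have hlo := absz_lower' ξ₁ ξ₂ h1'.le
  have harg := arg_exp_ge' lam ((ξ₁ : ℂ) - Complex.I * ξ₂)
  set β := lam.im
  set A := Real.exp (-(ξ₁ * ξ₂))
  set az := ‖(ξ₁ : ℂ) - Complex.I * ξ₂‖
  set E := Real.exp (Real.pi * |lam.re|)
  set C := Real.exp (Complex.arg ((ξ₁ : ℂ) - Complex.I * ξ₂) * (-lam.re))
  have hhi : az ≤ 3 * ξ₁ := by
    rw [habs_eq]
    calc Real.sqrt (ξ₁ ^ 2 + ξ₂ ^ 2) ≤ Real.sqrt ((3 * ξ₁) ^ 2) := by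
          apply Real.sqrt_le_sqrt
          nlinarith [_root_.sq_abs ξ₂, abs_nonneg ξ₂]
      _ = 3 * ξ₁ := Real.sqrt_sq (by linarith)
  have hkey : az ^ (β - 1) ≤ 3 ^ β * ξ₁ ^ β := by
    calc az ^ (β - 1) ≤ az ^ β :=
          Real.rpow_le_rpow_of_exponent_le (by linarith) (by linarith)
      _ ≤ (3 * ξ₁) ^ β := Real.rpow_le_rpow (by linarith) hhi hβ
      _ = 3 ^ β * ξ₁ ^ β := Real.mul_rpow (by norm_num) h1'.le
  have hA : 0 < A := Real.exp_pos _
  calc A * az ^ (β - 1) / C ≤ A * (3 ^ β * ξ₁ ^ β) / Real.exp (-(Real.pi * |lam.re|)) := by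
        gcongr
    _ = E * (3 ^ β * ξ₁ ^ β) * A := by
        rw [Real.exp_neg, div_inv_eq_mul]; ring

set_option maxHeartbeats 2000000 in
theorem Psi_n_lower_bound (lam : ℂ) (hlam : 0 ≤ lam.im) (α : ℝ) (hα : α ∈ Set.Ioo 1 2)
    (φ : ℝ → ℝ) (hφ : ContDiff ℝ (⊤ : ℕ∞) φ)
    (hφ0 : ∀ s : ℝ, s ≤ 1 → φ s = 0) (hφ1 : ∀ s : ℝ, 2 ≤ s → φ s = 1)
    (hφb : ∀ s : ℝ, 0 ≤ φ s ∧ φ s ≤ 1)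
    (u : ℝ → ℝ → ℂ)
    (hu : ∀ ξ₁ ξ₂ : ℝ, u ξ₁ ξ₂ =
      Complex.exp (-((ξ₁ : ℂ) * ξ₂) / 2 + Complex.I * ξ₁ ^ 2 / 4) *
        ((ξ₁ : ℂ) - Complex.I * ξ₂) ^ (-(1 + Complex.I * lam) / 2))
    (Ψ : ℕ → ℝ → ℝ → ℂ)
    (hΨ : ∀ (n : ℕ) (ξ₁ ξ₂ : ℝ), Ψ n ξ₁ ξ₂ =
      Set.indicator (Set.Icc (1 : ℝ) 2) (fun _ => (1 : ℂ)) (n * ξ₂) *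
        (φ (ξ₁ / ((n : ℝ) ^ α * ξ₂)) : ℂ) * u ξ₁ ξ₂) :
    ∃ c > (0 : ℝ), ∃ N : ℕ, ∀ n ≥ N,
      (0 < lam.im →
        c * (n : ℝ) ^ (lam.im - 1) ≤ ∫ p : ℝ × ℝ, ‖Ψ n p.1 p.2‖ ^ 2) ∧
      (lam.im = 0 →
        c * Real.log n / n ≤ ∫ p : ℝ × ℝ, ‖Ψ n p.1 p.2‖ ^ 2) := by
  obtain ⟨hα1, hα2⟩ := hα
  set β := lam.im with hβdef
  set E := Real.exp (Real.pi * |lam.re|) with hEdef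
  have hEpos : 0 < E := Real.exp_pos _
  set c₁ := Real.exp (-2) / (E * Real.sqrt 2) with hc₁def
  have hc₁pos : 0 < c₁ := by
    apply div_pos (Real.exp_pos _)
    exact mul_pos hEpos (Real.sqrt_pos.mpr (by norm_num))
  -- the key lower bound, valid for all sufficiently large n
  have key : ∀ n : ℕ, 1 ≤ n → (4 : ℝ) ≤ (n : ℝ) ^ (2 - α) →
      c₁ * (∫ x in (4 * (n:ℝ) ^ (α - 1))..(n:ℝ), x ^ (β - 1)) * (1 / n)
        ≤ ∫ p : ℝ × ℝ, ‖Ψ n p.1 p.2‖ ^ 2 := by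
    intro n hn1 hn4
    have hn0 : (0:ℝ) < n := by exact_mod_cast hn1
    have hn1' : (1:ℝ) ≤ n := by exact_mod_cast hn1
    set a : ℝ := 4 * (n:ℝ) ^ (α - 1) with hadef
    have hnα1 : (1:ℝ) ≤ (n:ℝ) ^ (α - 1) := Real.one_le_rpow hn1' (by linarith)
    have hnα0 : (0:ℝ) < (n:ℝ) ^ (α - 1) := by linarith
    have hapos : 0 < a := by positivity
    have ha4 : (4:ℝ) ≤ a := by nlinarith
    have hprod : (n:ℝ) ^ (2 - α) * (n:ℝ) ^ (α - 1) = n := by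
      rw [← Real.rpow_add hn0, show (2 - α) + (α - 1) = 1 by ring, Real.rpow_one]
    have hab : a ≤ n := by
      calc a = 4 * (n:ℝ) ^ (α - 1) := hadef
        _ ≤ (n:ℝ) ^ (2 - α) * (n:ℝ) ^ (α - 1) :=
            mul_le_mul_of_nonneg_right hn4 hnα0.le
        _ = n := hprod
    have hnαa : (n:ℝ) ^ α * (2 / n) = 2 * (n:ℝ) ^ (α - 1) := by
      rw [Real.rpow_sub hn0, Real.rpow_one]; field_simp
    -- measurability
    have hψm : Measurable (fun p : ℝ × ℝ => ‖Ψ n p.1 p.2‖ ^ 2) := by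
      have hfun : (fun p : ℝ × ℝ => Ψ n p.1 p.2) = fun p =>
          Set.indicator (Set.Icc (1:ℝ) 2) (fun _ => (1:ℂ)) (n * p.2) *
          (φ (p.1 / ((n:ℝ) ^ α * p.2)) : ℂ) *
          (Complex.exp (-((p.1 : ℂ) * p.2) / 2 + Complex.I * p.1 ^ 2 / 4) *
            ((p.1 : ℂ) - Complex.I * p.2) ^ (-(1 + Complex.I * lam) / 2)) := by
        funext p; rw [hΨ, hu]
      have mre : Measurable (fun p : ℝ × ℝ => ((p.1 : ℂ))) :=
        Complex.measurable_ofReal.comp measurable_fst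
      have mim : Measurable (fun p : ℝ × ℝ => ((p.2 : ℂ))) :=
        Complex.measurable_ofReal.comp measurable_snd
      have hΨm : Measurable (fun p : ℝ × ℝ => Ψ n p.1 p.2) := by
        rw [hfun]
        refine Measurable.mul (Measurable.mul ?_ ?_) (Measurable.mul ?_ ?_)
        · exact (Measurable.indicator measurable_const measurableSet_Icc).comp
            (measurable_snd.const_mul _)
        · exact Complex.measurable_ofReal.comp (hφ.continuous.measurable.comp
            (measurable_fst.div (measurable_snd.const_mul _)))
        · exact Complex.measurable_exp.comp
            ((((mre.mul mim).neg.div_const 2).add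
              ((measurable_const.mul (mre.pow_const 2)).div_const 4)))
        · exact (measurable_cpow_const' _).comp (mre.sub (measurable_const.mul mim))
      exact (continuous_norm.measurable.comp hΨm).pow_const 2
    -- dominating function and integrability
    set g : ℝ × ℝ → ℝ := fun p =>
      Set.indicator (Set.Ici (1:ℝ))
        (fun x => (E * 3 ^ β) * (x ^ β * Real.exp (-(1/(n:ℝ)) * x))) p.1 *
      Set.indicator (Set.Icc (1/(n:ℝ)) (2/(n:ℝ))) (fun _ => (1:ℝ)) p.2 with hgdef
    have hg0 : ∀ p, 0 ≤ g p := by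
      intro p
      apply mul_nonneg
      · refine Set.indicator_nonneg (fun x hx => ?_) _
        have hx0 : (0:ℝ) < x := lt_of_lt_of_le one_pos hx
        positivity
      · exact Set.indicator_nonneg (fun x _ => by norm_num) _
    have hg : Integrable g := by
      rw [hgdef, MeasureTheory.Measure.volume_eq_prod]
      apply Integrable.mul_prod
      · rw [integrable_indicator_iff measurableSet_Ici]
        have h0 : IntegrableOn (fun x : ℝ => x ^ β * Real.exp (-(1/(n:ℝ)) * x))
            (Set.Ioi 0) := by
          have := integrableOn_rpow_mul_exp_neg_mul_rpow
            (show (-1:ℝ) < β by linarith) (zero_lt_one)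
            (show (0:ℝ) < 1/(n:ℝ) by positivity)
          simpa [Real.rpow_one] using this
        exact (h0.mono_set (Set.Ici_subset_Ioi.mpr (by norm_num))).const_mul _
      · rw [integrable_indicator_iff measurableSet_Icc]
        exact integrableOn_const measure_Icc_lt_top.ne
    have hbound : ∀ p : ℝ × ℝ, ‖‖Ψ n p.1 p.2‖ ^ 2‖ ≤ g p := by
      rintro ⟨x, y⟩
      rw [Real.norm_of_nonneg (by positivity), hΨ, hu]
      by_cases hy : (n:ℝ) * y ∈ Set.Icc (1:ℝ) 2
      · rw [Set.indicator_of_mem hy]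
        obtain ⟨hy1, hy2⟩ := hy
        have hyl : 1/(n:ℝ) ≤ y := by rw [div_le_iff₀ hn0]; linarith
        have hyr : y ≤ 2/(n:ℝ) := by rw [le_div_iff₀ hn0]; linarith
        have hy0 : 0 < y := lt_of_lt_of_le (by positivity) hyl
        by_cases hx : x ≤ (n:ℝ) ^ α * y
        · have hφz : φ (x / ((n:ℝ) ^ α * y)) = 0 := by
            apply hφ0
            rw [div_le_one (by positivity)]; exact hx
          rw [hφz]
          simpa using hg0 (x, y)
        · push_neg at hx
          have hnαy : (1:ℝ) ≤ (n:ℝ) ^ α * y := by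
            have : (n:ℝ) ^ (α - 1) ≤ (n:ℝ) ^ α * y := by
              have : (n:ℝ) ^ α * (1/n) ≤ (n:ℝ) ^ α * y :=
                mul_le_mul_of_nonneg_left hyl (by positivity)
              calc (n:ℝ) ^ (α - 1) = (n:ℝ) ^ α * (1/n) := by
                    rw [Real.rpow_sub hn0, Real.rpow_one]; ring
                _ ≤ _ := this
            linarith
          have hx1 : (1:ℝ) ≤ x := le_trans hnαy hx.le
          have hgx : g (x, y) = (E * 3 ^ β) * (x ^ β * Real.exp (-(1/(n:ℝ)) * x)) := by
            rw [hgdef]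
            simp only
            rw [Set.indicator_of_mem (Set.mem_Ici.mpr hx1),
              Set.indicator_of_mem (Set.mem_Icc.mpr ⟨hyl, hyr⟩), mul_one]
          rw [hgx]
          have habs : ‖(1:ℂ) * (φ (x / ((n:ℝ) ^ α * y)) : ℂ) *
              (Complex.exp (-((x : ℂ) * y) / 2 + Complex.I * x ^ 2 / 4) *
                ((x : ℂ) - Complex.I * y) ^ (-(1 + Complex.I * lam) / 2))‖ ^ 2
              ≤ ‖Complex.exp (-((x : ℂ) * y) / 2 + Complex.I * x ^ 2 / 4) *
                ((x : ℂ) - Complex.I * y) ^ (-(1 + Complex.I * lam) / 2)‖ ^ 2 := by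
            rw [norm_mul, norm_mul, norm_one, one_mul, mul_pow]
            have hb1 : ‖(φ (x / ((n:ℝ) ^ α * y)) : ℂ)‖ ≤ 1 := by
              rw [Complex.norm_real, Real.norm_eq_abs, abs_of_nonneg (hφb _).1]
              exact (hφb _).2
            have hb0 := norm_nonneg ((φ (x / ((n:ℝ) ^ α * y)) : ℂ))
            have ha2 : ‖(φ (x / ((n:ℝ) ^ α * y)) : ℂ)‖ ^ 2 ≤ 1 := by nlinarith
            have hA2 := sq_nonneg (‖Complex.exp (-((x : ℂ) * y) / 2 +
              Complex.I * x ^ 2 / 4) * ((x : ℂ) - Complex.I * y) ^ (-(1 + Complex.I * lam) / 2)‖)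
            nlinarith
          refine le_trans habs ?_
          refine le_trans (abs_u_sq_upper' lam hlam x y hx1 ?_) ?_
          · rw [abs_of_pos hy0]
            calc y ≤ 2/(n:ℝ) := hyr
              _ ≤ 2 := by rw [div_le_iff₀ hn0]; nlinarith
          · have hexp : Real.exp (-(x * y)) ≤ Real.exp (-(1/(n:ℝ)) * x) := by
              apply Real.exp_le_exp.mpr
              have : (1/(n:ℝ)) * x ≤ y * x :=
                mul_le_mul_of_nonneg_right hyl (by linarith)
              nlinarith
            calc E * (3 ^ β * x ^ β) * Real.exp (-(x * y))
                ≤ E * (3 ^ β * x ^ β) * Real.exp (-(1/(n:ℝ)) * x) := by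
                  apply mul_le_mul_of_nonneg_left hexp
                  positivity
              _ = (E * 3 ^ β) * (x ^ β * Real.exp (-(1/(n:ℝ)) * x)) := by ring
      · rw [Set.indicator_of_notMem hy]
        simpa using hg0 (x, y)
    have hint : Integrable (fun p : ℝ × ℝ => ‖Ψ n p.1 p.2‖ ^ 2) :=
      hg.mono' hψm.aestronglyMeasurable (Filter.Eventually.of_forall hbound)
    set Q : Set (ℝ × ℝ) := Set.Icc a (n:ℝ) ×ˢ Set.Icc (1/(n:ℝ)) (2/(n:ℝ)) with hQdef
    have step1 : ∫ p in Q, ‖Ψ n p.1 p.2‖ ^ 2 ≤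
        ∫ p : ℝ × ℝ, ‖Ψ n p.1 p.2‖ ^ 2 :=
      setIntegral_le_integral hint (Filter.Eventually.of_forall fun p => by positivity)
    have hlow1 : IntegrableOn (fun x : ℝ => c₁ * x ^ (β - 1)) (Set.Icc a (n:ℝ)) := by
      apply ContinuousOn.integrableOn_compact isCompact_Icc
      apply ContinuousOn.mul continuousOn_const
      intro x hx
      exact (Real.continuousAt_rpow_const x _
        (Or.inl (ne_of_gt (lt_of_lt_of_le hapos hx.1)))).continuousWithinAt
    have hlow2 : IntegrableOn (fun _ : ℝ => (1:ℝ)) (Set.Icc (1/(n:ℝ)) (2/(n:ℝ))) :=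
      integrableOn_const measure_Icc_lt_top.ne
    have hlowint : IntegrableOn (fun p : ℝ × ℝ => c₁ * p.1 ^ (β - 1) * (1:ℝ)) Q := by
      rw [IntegrableOn, hQdef, MeasureTheory.Measure.volume_eq_prod, ← Measure.prod_restrict]
      exact Integrable.mul_prod (f := fun x : ℝ => c₁ * x ^ (β - 1)) (g := fun _ : ℝ => (1:ℝ)) hlow1 hlow2
    have step2 : ∫ p in Q, c₁ * p.1 ^ (β - 1) * (1:ℝ) ≤
        ∫ p in Q, ‖Ψ n p.1 p.2‖ ^ 2 := by
      apply setIntegral_mono_on hlowint hint.integrableOn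
        (measurableSet_Icc.prod measurableSet_Icc)
      rintro ⟨x, y⟩ hp
      obtain ⟨⟨hx1, hx2⟩, hy1, hy2⟩ := hp
      dsimp only at hx1 hx2 hy1 hy2 ⊢
      rw [hΨ, hu, mul_one]
      have hy0 : 0 < y := lt_of_lt_of_le (by positivity) hy1
      have hxa : 0 < x := lt_of_lt_of_le hapos hx1
      have hmem : (n:ℝ) * y ∈ Set.Icc (1:ℝ) 2 := by
        constructor
        · calc (1:ℝ) = n * (1/n) := by field_simp
            _ ≤ n * y := mul_le_mul_of_nonneg_left hy1 hn0.le
        · calc (n:ℝ) * y ≤ n * (2/n) := mul_le_mul_of_nonneg_left hy2 hn0.le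
            _ = 2 := by field_simp
      rw [Set.indicator_of_mem hmem]
      have hφ1' : φ (x / ((n:ℝ) ^ α * y)) = 1 := by
        apply hφ1
        rw [le_div_iff₀ (by positivity)]
        calc 2 * ((n:ℝ) ^ α * y) ≤ 2 * ((n:ℝ) ^ α * (2/n)) := by
              apply mul_le_mul_of_nonneg_left _ (by norm_num)
              exact mul_le_mul_of_nonneg_left hy2 (by positivity)
          _ = 4 * (n:ℝ) ^ (α - 1) := by rw [hnαa]; ring
          _ = a := hadef.symm
          _ ≤ x := hx1
      rw [hφ1']
      have habs : ‖(1:ℂ) * ((1:ℝ) : ℂ) *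
          (Complex.exp (-((x : ℂ) * y) / 2 + Complex.I * x ^ 2 / 4) *
            ((x : ℂ) - Complex.I * y) ^ (-(1 + Complex.I * lam) / 2))‖ ^ 2
          = ‖Complex.exp (-((x : ℂ) * y) / 2 + Complex.I * x ^ 2 / 4) *
            ((x : ℂ) - Complex.I * y) ^ (-(1 + Complex.I * lam) / 2)‖ ^ 2 := by
        norm_num
      rw [habs]
      have hyx : |y| ≤ x := by
        rw [abs_of_pos hy0]
        calc y ≤ 2/(n:ℝ) := hy2
          _ ≤ 2 := by rw [div_le_iff₀ hn0]; nlinarith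
          _ ≤ a := by linarith
          _ ≤ x := hx1
      refine le_trans ?_ (abs_u_sq_lower' lam hlam x y hxa hyx)
      have hxy2 : x * y ≤ 2 := by
        calc x * y ≤ (n:ℝ) * (2/n) := by
              apply mul_le_mul hx2 hy2 hy0.le hn0.le
          _ = 2 := by field_simp
      have hexp : Real.exp (-2) ≤ Real.exp (-(x * y)) := by
        apply Real.exp_le_exp.mpr; linarith
      rw [← hβdef, hc₁def, div_mul_eq_mul_div]
      gcongr
      all_goals first
        | exact mul_le_mul_of_nonneg_right hexp (Real.rpow_nonneg hxa.le _)
        | skip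
    have step3 : ∫ p in Q, c₁ * p.1 ^ (β - 1) * (1:ℝ) =
        (∫ x in Set.Icc a (n:ℝ), c₁ * x ^ (β - 1)) * (1/n) := by
      rw [hQdef, MeasureTheory.Measure.volume_eq_prod,
        setIntegral_prod_mul (fun x : ℝ => c₁ * x ^ (β - 1)) (fun _ : ℝ => (1:ℝ))]
      congr 1
      rw [setIntegral_const]
      rw [measureReal_def, Real.volume_Icc]
      rw [smul_eq_mul, mul_one, ENNReal.toReal_ofReal (by rw [sub_nonneg]; gcongr <;> norm_num)]
      field_simp
      try norm_num
    have step4 : ∫ x in Set.Icc a (n:ℝ), c₁ * x ^ (β - 1) =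
        c₁ * ∫ x in a..(n:ℝ), x ^ (β - 1) := by
      rw [MeasureTheory.integral_Icc_eq_integral_Ioc,
        ← intervalIntegral.integral_of_le hab, intervalIntegral.integral_const_mul]
    calc c₁ * (∫ x in a..(n:ℝ), x ^ (β - 1)) * (1/n)
        = (∫ x in Set.Icc a (n:ℝ), c₁ * x ^ (β - 1)) * (1/n) := by rw [step4]
      _ = ∫ p in Q, c₁ * p.1 ^ (β - 1) * (1:ℝ) := step3.symm
      _ ≤ ∫ p in Q, ‖Ψ n p.1 p.2‖ ^ 2 := step2
      _ ≤ _ := step1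
  have h2α : (0:ℝ) < 2 - α := by linarith
  rcases lt_or_eq_of_le hlam with hβpos | hβ0
  · -- case 0 < lam.im
    set R : ℝ := max (max 1 ((4:ℝ) ^ (2 - α)⁻¹)) ((2 * 4 ^ β) ^ ((2 - α) * β)⁻¹) with hRdef
    obtain ⟨N, hN⟩ := exists_nat_ge R
    refine ⟨c₁ / (2 * β), by positivity, N, fun n hn => ?_⟩
    have hnR : R ≤ (n : ℝ) := le_trans hN (by exact_mod_cast hn)
    have hn1 : 1 ≤ n := by
      have : (1:ℝ) ≤ n := le_trans (le_trans (le_max_left 1 _) (le_max_left _ _)) hnR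
      exact_mod_cast this
    have hn0 : (0:ℝ) < n := by exact_mod_cast hn1
    have hn4 : (4:ℝ) ≤ (n:ℝ) ^ (2 - α) := by
      have h1 : (4:ℝ) ^ (2 - α)⁻¹ ≤ n :=
        le_trans (le_trans (le_max_right _ _) (le_max_left _ _)) hnR
      calc (4:ℝ) = ((4:ℝ) ^ (2 - α)⁻¹) ^ (2 - α) := by
            rw [← Real.rpow_mul (by norm_num : (0:ℝ) ≤ 4), inv_mul_cancel₀ h2α.ne',
              Real.rpow_one]
        _ ≤ (n:ℝ) ^ (2 - α) := Real.rpow_le_rpow (by positivity) h1 h2α.le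
    have hcb : (2:ℝ) * 4 ^ β ≤ (n:ℝ) ^ ((2 - α) * β) := by
      have h1 : ((2:ℝ) * 4 ^ β) ^ ((2 - α) * β)⁻¹ ≤ n := le_trans (le_max_right _ _) hnR
      have hpos : (0:ℝ) < 2 * 4 ^ β := by positivity
      have he : (0:ℝ) < (2 - α) * β := by positivity
      calc (2:ℝ) * 4 ^ β = (((2:ℝ) * 4 ^ β) ^ ((2 - α) * β)⁻¹) ^ ((2 - α) * β) := by
            rw [← Real.rpow_mul hpos.le, inv_mul_cancel₀ he.ne', Real.rpow_one]
        _ ≤ _ := Real.rpow_le_rpow (by positivity) h1 he.le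
    constructor
    · intro _
      refine le_trans ?_ (key n hn1 hn4)
      rw [integral_rpow (Or.inl (by linarith : (-1:ℝ) < β - 1)),
        show β - 1 + 1 = β by ring]
      have haβ : (4 * (n:ℝ) ^ (α - 1)) ^ β = 4 ^ β * (n:ℝ) ^ ((α - 1) * β) := by
        rw [Real.mul_rpow (by norm_num) (by positivity), ← Real.rpow_mul hn0.le]
      have hsplit : (n:ℝ) ^ β = (n:ℝ) ^ ((2 - α) * β) * (n:ℝ) ^ ((α - 1) * β) := by
        rw [← Real.rpow_add hn0]; congr 1; ring
      have hX0 : (0:ℝ) ≤ (n:ℝ) ^ ((α - 1) * β) := Real.rpow_nonneg hn0.le _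
      have hle : (4 * (n:ℝ) ^ (α - 1)) ^ β ≤ (n:ℝ) ^ β / 2 := by
        rw [haβ, hsplit]
        have h2 := mul_le_mul_of_nonneg_right hcb hX0
        linarith
      have hβ1 : (n:ℝ) ^ (β - 1) = (n:ℝ) ^ β / n := by
        rw [Real.rpow_sub hn0, Real.rpow_one]
      rw [hβ1]
      calc c₁ / (2 * β) * ((n:ℝ) ^ β / n) = c₁ * (((n:ℝ) ^ β / 2) / β) * (1 / n) := by
            field_simp
            try ring
        _ ≤ c₁ * (((n:ℝ) ^ β - (4 * (n:ℝ) ^ (α - 1)) ^ β) / β) * (1 / n) := by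
            gcongr
            linarith
    · intro h0
      exfalso; linarith [hβpos, h0.le, h0.ge]
  · -- case lam.im = 0
    set R : ℝ := max (max 1 ((4:ℝ) ^ (2 - α)⁻¹)) (Real.exp (2 * Real.log 4 / (2 - α))) with hRdef
    obtain ⟨N, hN⟩ := exists_nat_ge R
    refine ⟨c₁ * (2 - α) / 2, by positivity, N, fun n hn => ?_⟩
    have hnR : R ≤ (n : ℝ) := le_trans hN (by exact_mod_cast hn)
    have hn1 : 1 ≤ n := by
      have : (1:ℝ) ≤ n := le_trans (le_trans (le_max_left 1 _) (le_max_left _ _)) hnR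
      exact_mod_cast this
    have hn0 : (0:ℝ) < n := by exact_mod_cast hn1
    have hn1' : (1:ℝ) ≤ n := by exact_mod_cast hn1
    have hn4 : (4:ℝ) ≤ (n:ℝ) ^ (2 - α) := by
      have h1 : (4:ℝ) ^ (2 - α)⁻¹ ≤ n :=
        le_trans (le_trans (le_max_right _ _) (le_max_left _ _)) hnR
      calc (4:ℝ) = ((4:ℝ) ^ (2 - α)⁻¹) ^ (2 - α) := by
            rw [← Real.rpow_mul (by norm_num : (0:ℝ) ≤ 4), inv_mul_cancel₀ h2α.ne',
              Real.rpow_one]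
        _ ≤ (n:ℝ) ^ (2 - α) := Real.rpow_le_rpow (by positivity) h1 h2α.le
    have hlog : 2 * Real.log 4 ≤ (2 - α) * Real.log n := by
      have h1 : Real.exp (2 * Real.log 4 / (2 - α)) ≤ n := le_trans (le_max_right _ _) hnR
      have h2 := Real.log_le_log (Real.exp_pos _) h1
      rw [Real.log_exp] at h2
      calc 2 * Real.log 4 = (2 - α) * (2 * Real.log 4 / (2 - α)) := by field_simp
        _ ≤ (2 - α) * Real.log n := mul_le_mul_of_nonneg_left h2 h2α.le
    have hlogn : 0 ≤ Real.log n := Real.log_nonneg hn1'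
    refine ⟨fun h => by exfalso; linarith [hβ0.le, hβ0.ge], fun _ => ?_⟩
    refine le_trans ?_ (key n hn1 hn4)
    have hnα1 : (1:ℝ) ≤ (n:ℝ) ^ (α - 1) := Real.one_le_rpow hn1' (by linarith)
    have hapos : (0:ℝ) < 4 * (n:ℝ) ^ (α - 1) := by positivity
    have hintv : ∫ x in (4 * (n:ℝ) ^ (α - 1))..(n:ℝ), x ^ (β - 1)
        = Real.log ((n:ℝ) / (4 * (n:ℝ) ^ (α - 1))) := by
      rw [show β - 1 = (-1:ℝ) by rw [← hβ0]; ring]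
      simp only [Real.rpow_neg_one]
      exact integral_inv_of_pos hapos hn0
    rw [hintv]
    have hlogval : Real.log ((n:ℝ) / (4 * (n:ℝ) ^ (α - 1)))
        = (2 - α) * Real.log n - Real.log 4 := by
      rw [Real.log_div hn0.ne' (by positivity),
        Real.log_mul (by norm_num) (by positivity), Real.log_rpow hn0]
      ring
    rw [hlogval]
    have h1 : (2 - α) / 2 * Real.log n ≤ (2 - α) * Real.log n - Real.log 4 := by linarith
    calc c₁ * (2 - α) / 2 * Real.log n / n = c₁ * ((2 - α) / 2 * Real.log n) * (1 / n) := by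
          ring
      _ ≤ c₁ * ((2 - α) * Real.log n - Real.log 4) * (1 / n) := by gcongr
end
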